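/- arXiv:1402.4498 — 2 statements merged into one kernel-verified Lean document; each statement's English description precedes it below -/
import Mathlib

section
/- Let k be a number field and d a positive integer. Let P = (a_0,…,a_d) and Q = (b_0,…,b_d) be distinct points of ℙ^d, let L be the line through P and Q, and let φ_{PQ} be the degree ≤ d rational map ℙ^1 → ℙ^1 given by φ_{PQ}(x) = (Σ_{i=0}^d a_i x^i)/(Σ_{i=0}^d b_i x^i). Then ψ^{-1}(L(k)) ⊂ φ_{PQ}^{-1}(ℙ^1(k)); that is, every point R ∈ ℙ^1(k̄) with [k(R):k] = d and ψ(R) ∈ L(k) satisfies φ_{PQ}(R) ∈ ℙ^1(k). -/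
open scoped Classical
open NumberField IsDedekindDomain Polynomial

noncomputable section

/-! ### Places and normalized absolute values of a number field -/

/-- The set of places of a number field `K`: infinite (archimedean) places together with
finite places (nonzero prime ideals of the ring of integers). -/
def Place (K : Type*) [Field K] [NumberField K] :=
  InfinitePlace K ⊕ HeightOneSpectrum (𝓞 K)

/-- The order of vanishing of `x` at a finite place `v`. -/
def finOrd {K : Type*} [Field K] [NumberField K]
    (v : HeightOneSpectrum (𝓞 K)) (x : K) : ℤ :=
  if h : v.valuation K x = 0 then 0 else -(Multiplicative.toAdd (WithZero.unzero h))

/-- The normalized absolute value `‖x‖_v = |x|_v^{[K_v:ℚ_v]/[K:ℚ]}` attached to a place `v`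
of a number field `K`, normalized so that the product formula holds. -/
def placeNorm (K : Type*) [Field K] [NumberField K] : Place K → K → ℝ
  | Sum.inl w, x => (w x) ^ ((w.mult : ℝ) / (Module.finrank ℚ K : ℝ))
  | Sum.inr v, x =>
      if x = 0 then 0
      else (Ideal.absNorm v.asIdeal : ℝ) ^ (-(finOrd v x : ℝ) / (Module.finrank ℚ K : ℝ))

/-- A place `w` of `K` lies above a place `v` of `k` (for `K` an extension of `k`)
if they define the same topology on `k`. -/
def liesAbove {k K : Type*} [Field k] [NumberField k] [Field K] [NumberField K]
    [Algebra k K] (w : Place K) (v : Place k) : Prop :=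
  ∀ x : k, placeNorm K w (algebraMap k K x) < 1 ↔ placeNorm k v x < 1

/-! ### Heights and proximity functions for `k`-rational points of `ℙⁿ` -/

variable (k : Type*) [Field k] [NumberField k]

/-- The absolute logarithmic height of a point of `ℙⁿ(k)`. -/
def heightK {n : ℕ} (P : Projectivization k (Fin (n + 1) → k)) : ℝ :=
  ∑ᶠ v : Place k,
    Real.log (Finset.univ.sup' Finset.univ_nonempty fun i => placeNorm k v (P.rep i))

/-- The standard local height at `v` of a point of `ℙⁿ(k)` relative to the hyperplane with
coefficient vector `c`. -/
def hypLocal {n : ℕ} (c : Fin (n + 1) → k) (v : Place k)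
    (P : Projectivization k (Fin (n + 1) → k)) : ℝ :=
  Real.log ((Finset.univ.sup' Finset.univ_nonempty fun i => placeNorm k v (c i)) *
    (Finset.univ.sup' Finset.univ_nonempty fun i => placeNorm k v (P.rep i)) /
    placeNorm k v (∑ i, c i * P.rep i))

/-- The proximity function `m_{H,S}` of a point of `ℙⁿ(k)` with respect to the hyperplane `H`
with coefficient vector `c` and the finite set `S` of places of `k`. -/
def mHyp {n : ℕ} (c : Fin (n + 1) → k) (S : Finset (Place k))
    (P : Projectivization k (Fin (n + 1) → k)) : ℝ :=
  ∑ v ∈ S, hypLocal k c v P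

/-- The standard local height `h_{Q,v}(P)` at `v` of `P ∈ ℙ¹(k)` relative to the divisor
given by the point `Q ∈ ℙ¹(k)`. -/
def ptLocalK (Q P : Projectivization k (Fin 2 → k)) (v : Place k) : ℝ :=
  Real.log (max (placeNorm k v (P.rep 0)) (placeNorm k v (P.rep 1)) *
    max (placeNorm k v (Q.rep 0)) (placeNorm k v (Q.rep 1)) /
    placeNorm k v (P.rep 0 * Q.rep 1 - P.rep 1 * Q.rep 0))

/-- The proximity function `m_{Q,S}(P)` for `k`-rational points `P` of `ℙ¹`. -/
def mPointK (Q : Projectivization k (Fin 2 → k)) (S : Finset (Place k))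
    (P : Projectivization k (Fin 2 → k)) : ℝ :=
  ∑ v ∈ S, ptLocalK k Q P v

/-! ### Heights and proximity functions for points of `ℙ¹(k̄)` of finite degree -/

/-- The field of definition `k(P)` of a point `P ∈ ℙ¹(k̄)`: the subfield of `k̄` generated
over `k` by the ratios of the homogeneous coordinates of `P`. -/
def fieldOfDef (P : Projectivization (AlgebraicClosure k) (Fin 2 → AlgebraicClosure k)) :
    IntermediateField k (AlgebraicClosure k) :=
  IntermediateField.adjoin k {x | ∃ i j, P.rep i / P.rep j = x}

instance (P : Projectivization (AlgebraicClosure k) (Fin 2 → AlgebraicClosure k)) :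
    CharZero (fieldOfDef k P) :=
  charZero_of_injective_algebraMap (algebraMap k (fieldOfDef k P)).injective

instance (P : Projectivization (AlgebraicClosure k) (Fin 2 → AlgebraicClosure k)) :
    FiniteDimensional ℚ (fieldOfDef k P) := by
  have hfin : {x | ∃ i j : Fin 2, P.rep i / P.rep j = x}.Finite := by
    have : {x | ∃ i j : Fin 2, P.rep i / P.rep j = x}
        = Set.range (fun p : Fin 2 × Fin 2 => P.rep p.1 / P.rep p.2) := by
      ext x
      constructor
      · rintro ⟨i, j, rfl⟩; exact ⟨(i, j), rfl⟩
      · rintro ⟨⟨i, j⟩, rfl⟩; exact ⟨i, j, rfl⟩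
    rw [this]
    exact Set.finite_range _
  haveI : FiniteDimensional k (fieldOfDef k P) := by
    unfold fieldOfDef
    haveI := hfin.to_subtype
    apply IntermediateField.finiteDimensional_adjoin (S := _)
    intro x _
    exact Algebra.IsIntegral.isIntegral x
  exact Module.Finite.trans k (fieldOfDef k P)

instance (P : Projectivization (AlgebraicClosure k) (Fin 2 → AlgebraicClosure k)) :
    NumberField (fieldOfDef k P) := ⟨⟩

/-- The degree `[k(P):k]` of a point `P ∈ ℙ¹(k̄)` over `k`. -/
def degOver (P : Projectivization (AlgebraicClosure k) (Fin 2 → AlgebraicClosure k)) : ℕ :=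
  Module.finrank k (fieldOfDef k P)

/-- Normalized homogeneous coordinates of `P ∈ ℙ¹(k̄)`, with values in `k(P)`. -/
def coordVec (P : Projectivization (AlgebraicClosure k) (Fin 2 → AlgebraicClosure k)) :
    Fin 2 → fieldOfDef k P :=
  if P.rep 1 ≠ 0 then
    ![⟨P.rep 0 / P.rep 1, IntermediateField.subset_adjoin k _ ⟨0, 1, rfl⟩⟩, 1]
  else ![1, 0]

/-- The absolute logarithmic height of a point `P ∈ ℙ¹(k̄)`. -/
def hBar (P : Projectivization (AlgebraicClosure k) (Fin 2 → AlgebraicClosure k)) : ℝ :=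
  ∑ᶠ w : Place (fieldOfDef k P),
    Real.log (max (placeNorm (fieldOfDef k P) w (coordVec k P 0))
      (placeNorm (fieldOfDef k P) w (coordVec k P 1)))

/-- The standard local height of `P ∈ ℙ¹(k̄)` at a place `w` of `k(P)`, relative to the
divisor given by a point `Q ∈ ℙ¹(k)`. -/
def ptLocalBar (Q : Projectivization k (Fin 2 → k))
    (P : Projectivization (AlgebraicClosure k) (Fin 2 → AlgebraicClosure k))
    (w : Place (fieldOfDef k P)) : ℝ :=
  Real.log
    (max (placeNorm (fieldOfDef k P) w (algebraMap k _ (Q.rep 0)))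
        (placeNorm (fieldOfDef k P) w (algebraMap k _ (Q.rep 1))) *
      max (placeNorm (fieldOfDef k P) w (coordVec k P 0))
        (placeNorm (fieldOfDef k P) w (coordVec k P 1)) /
      placeNorm (fieldOfDef k P) w
        (algebraMap k _ (Q.rep 1) * coordVec k P 0 - algebraMap k _ (Q.rep 0) * coordVec k P 1))

/-- The proximity function `m_{Q,S}(P)` of `P ∈ ℙ¹(k̄)` with respect to the divisor given by
the point `Q ∈ ℙ¹(k)` and the finite set of places `S` of `k`:
`m_{Q,S}(P) = ∑_{v ∈ S} ∑_{w ∈ M_{k(P)}, w ∣ v} h_{Q,w}(P)`. -/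
def mBar (Q : Projectivization k (Fin 2 → k)) (S : Finset (Place k))
    (P : Projectivization (AlgebraicClosure k) (Fin 2 → AlgebraicClosure k)) : ℝ :=
  ∑ v ∈ S, ∑ᶠ w : Place (fieldOfDef k P), if liesAbove w v then ptLocalBar k Q P w else 0

/-- The proximity function `m_{D,S}(P)` for the divisor `D = P_1 + ⋯ + P_q` on `ℙ¹`. -/
def mDiv {q : ℕ} (Pts : Fin q → Projectivization k (Fin 2 → k)) (S : Finset (Place k))
    (P : Projectivization (AlgebraicClosure k) (Fin 2 → AlgebraicClosure k)) : ℝ :=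
  ∑ i, mBar k (Pts i) S P

/-- The natural inclusion `ℙ¹(k) → ℙ¹(k̄)`. -/
def embed (P : Projectivization k (Fin 2 → k)) :
    Projectivization (AlgebraicClosure k) (Fin 2 → AlgebraicClosure k) :=
  Projectivization.mk _ (fun i => algebraMap k (AlgebraicClosure k) (P.rep i)) (by
    intro hc
    apply P.rep_nonzero
    funext i
    have := congrFun hc i
    simp only [Pi.zero_apply] at this ⊢
    exact (algebraMap k (AlgebraicClosure k)).injective (by rw [map_zero]; exact this))

/-! ### Morphisms `ℙ¹ → ℙ¹` over `k` -/

/-- A (nonconstant) `k`-morphism `ℙ¹ → ℙ¹`, given by a pair of homogeneous forms of the same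
degree with no common root in `ℙ¹(k̄)`. -/
structure P1Mor (k : Type*) [Field k] where
  deg : ℕ
  degPos : 0 < deg
  f : Fin (deg + 1) → k
  g : Fin (deg + 1) → k
  noCommonRoot : ∀ x y : AlgebraicClosure k, ¬(x = 0 ∧ y = 0) →
    ¬((∑ i : Fin (deg + 1),
          algebraMap k (AlgebraicClosure k) (f i) * x ^ (i : ℕ) * y ^ (deg - (i : ℕ))) = 0 ∧
      (∑ i : Fin (deg + 1),
          algebraMap k (AlgebraicClosure k) (g i) * x ^ (i : ℕ) * y ^ (deg - (i : ℕ))) = 0)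

namespace P1Mor

variable {k}

/-- Value of the first defining form of `φ` at `(x, y)`. -/
def evalF (φ : P1Mor k) (x y : AlgebraicClosure k) : AlgebraicClosure k :=
  ∑ i : Fin (φ.deg + 1),
    algebraMap k (AlgebraicClosure k) (φ.f i) * x ^ (i : ℕ) * y ^ (φ.deg - (i : ℕ))

/-- Value of the second defining form of `φ` at `(x, y)`. -/
def evalG (φ : P1Mor k) (x y : AlgebraicClosure k) : AlgebraicClosure k :=
  ∑ i : Fin (φ.deg + 1),
    algebraMap k (AlgebraicClosure k) (φ.g i) * x ^ (i : ℕ) * y ^ (φ.deg - (i : ℕ))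

/-- The induced map on `ℙ¹(k̄)`. -/
def apply (φ : P1Mor k)
    (P : Projectivization (AlgebraicClosure k) (Fin 2 → AlgebraicClosure k)) :
    Projectivization (AlgebraicClosure k) (Fin 2 → AlgebraicClosure k) :=
  Projectivization.mk _ ![φ.evalF (P.rep 0) (P.rep 1), φ.evalG (P.rep 0) (P.rep 1)] (by
    intro hc
    have h0 := congrFun hc 0
    have h1 := congrFun hc 1
    simp only [Matrix.cons_val_zero, Matrix.cons_val_one, Matrix.head_cons,
      Pi.zero_apply] at h0 h1
    refine φ.noCommonRoot (P.rep 0) (P.rep 1) ?_ ⟨h0, h1⟩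
    rintro ⟨ha, hb⟩
    apply P.rep_nonzero
    funext i
    fin_cases i <;> simp [ha, hb])

end P1Mor

/-- The point `0 = (0:1)` of `ℙ¹(k̄)`. -/
def zeroPt : Projectivization (AlgebraicClosure k) (Fin 2 → AlgebraicClosure k) :=
  Projectivization.mk _ ![0, 1] (by
    intro hc
    have := congrFun hc 1
    simp at this)

/-- The point `∞ = (1:0)` of `ℙ¹(k̄)`. -/
def infPt : Projectivization (AlgebraicClosure k) (Fin 2 → AlgebraicClosure k) :=
  Projectivization.mk _ ![1, 0] (by
    intro hc
    have := congrFun hc 0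
    simp at this)

/-- The set `Φ(D,d,t,k)` of `k`-morphisms `φ : ℙ¹ → ℙ¹` with `deg φ ≤ d` and
`|φ⁻¹({0,∞}) ∩ Supp D| ≥ t`, where `D = P_1 + ⋯ + P_q`. -/
def PhiSet {q : ℕ} (Pts : Fin q → Projectivization k (Fin 2 → k)) (d : ℕ) (t : ℝ) :
    Set (P1Mor k) :=
  {φ | φ.deg ≤ d ∧ t ≤
    (({P | φ.apply P = zeroPt k ∨ φ.apply P = infPt k} ∩
      Set.range fun i => embed k (Pts i)).ncard : ℝ)}

/-- The set `Z(D,d,t,k) = ⋃_{φ ∈ Φ(D,d,t,k)} φ⁻¹(ℙ¹(k)) ⊆ ℙ¹(k̄)`. -/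
def ZSet {q : ℕ} (Pts : Fin q → Projectivization k (Fin 2 → k)) (d : ℕ) (t : ℝ) :
    Set (Projectivization (AlgebraicClosure k) (Fin 2 → AlgebraicClosure k)) :=
  ⋃ φ ∈ PhiSet k Pts d t, {P | φ.apply P ∈ Set.range (embed k)}

end

noncomputable section

/-! ### Linear algebra: hyperplanes, general and subgeneral position -/

variable (F : Type*) [Field F]

/-- The linear form with coefficient vector `c`. -/
def linForm {n : ℕ} (c : Fin n → F) : (Fin n → F) →ₗ[F] F :=
  ∑ i, c i • LinearMap.proj i

/-- Hyperplanes of `ℙⁿ`, given by their coefficient vectors, are in `m`-subgeneral position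
if any at most `m + 1` of them intersect in a (projective) set of dimension at most
`m - |I|` (where `dim ∅ = -1`). -/
def InSubgeneralPosition {n q : ℕ} (m : ℕ) (c : Fin q → Fin (n + 1) → F) : Prop :=
  ∀ I : Finset (Fin q), I.card ≤ m + 1 →
    Module.finrank F ↥(⨅ i ∈ I, LinearMap.ker (linForm F (c i))) ≤ m + 1 - I.card

/-- Hyperplanes of `ℙⁿ` in general position (`n`-subgeneral position). -/
def InGeneralPosition {n q : ℕ} (c : Fin q → Fin (n + 1) → F) : Prop :=
  InSubgeneralPosition F n c

/-- The coefficient vector `(a^i b^{d-i})_{0 ≤ i ≤ d}` of the hyperplane `H_P ⊆ ℙ^d`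
attached to a point `P = (a : b) ∈ ℙ¹`. -/
def hpCoeff (d : ℕ) (P : Projectivization F (Fin 2 → F)) : Fin (d + 1) → F :=
  fun j => P.rep 0 ^ (j : ℕ) * P.rep 1 ^ (d - (j : ℕ))

/-- The symmetrization morphism `σ : (ℙ¹)^d → ℙ^d`, sending a `d`-tuple of points
`(a_j : b_j)` to the coefficient vector of the binary form `∏_j (b_j x - a_j y)`. -/
noncomputable def symMap (F : Type*) [Field F] (d : ℕ)
    (x : Fin d → Projectivization F (Fin 2 → F)) :
    Projectivization F (Fin (d + 1) → F) :=
  Projectivization.mk F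
    (fun i : Fin (d + 1) =>
      (∏ j, (Polynomial.C ((x j).rep 1) * Polynomial.X - Polynomial.C ((x j).rep 0))).coeff i)
    (by
      set p : Polynomial F :=
        ∏ j, (Polynomial.C ((x j).rep 1) * Polynomial.X - Polynomial.C ((x j).rep 0)) with hp
      intro hc
      have hpne : p ≠ 0 := by
        rw [hp]
        apply Finset.prod_ne_zero_iff.mpr
        intro j _ h0
        apply (x j).rep_nonzero
        have ha := congrArg (fun r => Polynomial.coeff r 0) h0
        have hb := congrArg (fun r => Polynomial.coeff r 1) h0
        simp only [Polynomial.coeff_sub, Polynomial.coeff_zero, Polynomial.coeff_C_mul,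
          Polynomial.coeff_X_zero, Polynomial.coeff_X_one, mul_zero, mul_one,
          Polynomial.coeff_C, zero_sub, neg_eq_zero, sub_zero, if_true, one_ne_zero,
          if_false, reduceIte] at ha hb
        funext i
        fin_cases i
        · simpa using ha
        · simpa using hb
      have hdeg : p.natDegree ≤ d := by
        rw [hp]
        refine (Polynomial.natDegree_prod_le _ _).trans ?_
        have h1 : ∀ j : Fin d,
            (Polynomial.C ((x j).rep 1) * Polynomial.X - Polynomial.C ((x j).rep 0)).natDegree
              ≤ 1 := by
          intro j
          rw [sub_eq_add_neg, ← Polynomial.C_neg]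
          exact Polynomial.natDegree_linear_le
        have h2 : ∑ j, (Polynomial.C ((x j).rep 1) * Polynomial.X -
              Polynomial.C ((x j).rep 0)).natDegree ≤ ∑ _j : Fin d, (1 : ℕ) :=
          Finset.sum_le_sum fun j _ => h1 j
        simpa using h2
      have hz := congrFun hc ⟨p.natDegree, Nat.lt_succ_of_le hdeg⟩
      simp only [Pi.zero_apply] at hz
      exact hpne (Polynomial.leadingCoeff_eq_zero.mp hz))

end

noncomputable section

open scoped Classical

variable (k : Type*) [Field k] [NumberField k]

/-- The map `ψ` from points of `ℙ¹(k̄)` of degree `d` over `k` to `ℙ^d(k)`: if `P = (α : 1)`,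
then `ψ(P)` is the coefficient vector of the minimal polynomial of `α` over `k`. -/
def psiMap (d : ℕ)
    (Q : Projectivization (AlgebraicClosure k) (Fin 2 → AlgebraicClosure k)) :
    Projectivization k (Fin (d + 1) → k) :=
  if h : (fun i : Fin (d + 1) => (minpoly k (Q.rep 0 / Q.rep 1)).coeff i) ≠ 0 then
    Projectivization.mk k _ h
  else
    Projectivization.mk k (Pi.single 0 1) (fun hc => (one_ne_zero : (1 : k) ≠ 0) (by simpa using congrFun hc 0))

/-- `[u : v]` is a `k`-rational point of `ℙ¹(k̄)`. -/
def isKRationalPair (u v : AlgebraicClosure k) : Prop :=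
  ∃ a b : k, ¬(a = 0 ∧ b = 0) ∧
    algebraMap k (AlgebraicClosure k) b * u = algebraMap k (AlgebraicClosure k) a * v

/-- A set of points of `ℙⁿ(k)` is Zariski dense if it is not contained in any proper
Zariski closed subset, equivalently in any hypersurface. -/
def ZariskiDense {n : ℕ} (R : Set (Projectivization k (Fin (n + 1) → k))) : Prop :=
  ∀ (e : ℕ) (p : MvPolynomial (Fin (n + 1)) k), p.IsHomogeneous e → p ≠ 0 →
    ∃ P ∈ R, MvPolynomial.eval P.rep p ≠ 0

/-- Membership of a point of `ℙⁿ(k)` in the hyperplane (or line, for `n = 2`) of `ℙⁿ`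
given by a point of the dual projective space. -/
def memHyp {n : ℕ} (P : Projectivization k (Fin (n + 1) → k))
    (L : Projectivization k (Fin (n + 1) → k)) : Prop :=
  ∑ i, L.rep i * P.rep i = 0

/-- The point `P ∈ ℙ²(k)` is contained in three distinct lines among the `L i`. -/
def ThreeLinesThrough {q : ℕ} (L : Fin q → Projectivization k (Fin 3 → k))
    (P : Projectivization k (Fin 3 → k)) : Prop :=
  ∃ i₁ i₂ i₃, L i₁ ≠ L i₂ ∧ L i₁ ≠ L i₃ ∧ L i₂ ≠ L i₃ ∧
    memHyp k P (L i₁) ∧ memHyp k P (L i₂) ∧ memHyp k P (L i₃)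

/-- Lines `L_1, …, L_q` of `ℙ²` are of Type I if `q > 4`, two of them coincide, and some point
lies on three distinct lines among them. -/
def TypeI {q : ℕ} (L : Fin q → Projectivization k (Fin 3 → k)) : Prop :=
  4 < q ∧ (∃ i j, i ≠ j ∧ L i = L j) ∧ ∃ P, ThreeLinesThrough k L P

/-- Lines `L_1, …, L_q` of `ℙ²` are of Type II if `q > 4`, the lines are distinct, and there
are at least three noncollinear points each lying on three distinct lines among them. -/
def TypeII {q : ℕ} (L : Fin q → Projectivization k (Fin 3 → k)) : Prop :=
  4 < q ∧ Function.Injective L ∧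
    ∃ P₁ P₂ P₃, (¬∃ M, memHyp k P₁ M ∧ memHyp k P₂ M ∧ memHyp k P₃ M) ∧
      ThreeLinesThrough k L P₁ ∧ ThreeLinesThrough k L P₂ ∧ ThreeLinesThrough k L P₃

/-- The constant `c(L_1, …, L_q)`: `5` in the Type I case, `9/2` in the Type II case, and
`4` otherwise (Type III). -/
def cLines {q : ℕ} (L : Fin q → Projectivization k (Fin 3 → k)) : ℝ :=
  if TypeI k L then 5 else if TypeII k L then 9 / 2 else 4

end

/-! Write `α = R₀/R₁` and `A`, `B` for the polynomials with coefficient vectors `P`, `Q`. Since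
`[k(α):k] = d`, the minimal polynomial of `α` fits into `d + 1` coefficients, so evaluating
`ψ(R) = λ P + μ Q` at `α` gives `λ A(α) + μ B(α) = 0`. As `ψ(R) ≠ 0`, `λ ≠ 0` unless `B(α) = 0`
(where the quotient is `0` by convention), hence `A(α)/B(α) = -μ/λ ∈ k`. -/

theorem div_mem_range_algebraMap_of_mem_span_pair {K L V : Type*} [Field K] [Field L]
    [Algebra K L] [AddCommGroup V] [Module K V] (f : V →ₗ[K] L) {u v w : V}
    (hw : w ∈ Submodule.span K {u, v}) (hw0 : w ≠ 0) (hfw : f w = 0) :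
    f u / f v ∈ Set.range (algebraMap K L) := by
  obtain ⟨a, b, rfl⟩ := Submodule.mem_span_pair.mp hw
  by_cases hv : f v = 0
  · exact ⟨0, by simp [hv]⟩
  rw [map_add, map_smul, map_smul, Algebra.smul_def, Algebra.smul_def] at hfw
  have ha : a ≠ 0 := by
    rintro rfl
    obtain rfl : b = 0 := by simpa [hv] using hfw
    simp at hw0
  refine ⟨-b / a, ?_⟩
  rw [map_div₀, map_neg, eq_div_iff hv, div_mul_eq_mul_div, div_eq_iff (by simpa using ha)]
  linear_combination -hfw

namespace Polynomial

variable {R S : Type*} [CommSemiring R]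

theorem finCoeff_ne_zero {p : R[X]} {d : ℕ} (hp : p ≠ 0) (hd : p.natDegree ≤ d) :
    (fun i : Fin (d + 1) => p.coeff i) ≠ 0 := fun h =>
  hp (leadingCoeff_eq_zero.mp (congrFun h ⟨_, Nat.lt_succ_of_le hd⟩))

theorem linearCombination_finCoeff [Semiring S] [Algebra R S] {p : R[X]} {d : ℕ}
    (hd : p.natDegree ≤ d) (x : S) :
    Fintype.linearCombination R (fun i : Fin (d + 1) => x ^ (i : ℕ)) (fun i => p.coeff i) =
      aeval x p := by
  rw [Fintype.linearCombination_apply, aeval_eq_sum_range' (Nat.lt_succ_of_le hd),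
    Fin.sum_univ_eq_sum_range (fun i => p.coeff i • x ^ i)]

end Polynomial

section Psi

variable (k : Type*) [Field k] [NumberField k]

theorem natDegree_minpoly_le_degOver
    (R : Projectivization (AlgebraicClosure k) (Fin 2 → AlgebraicClosure k)) :
    (minpoly k (R.rep 0 / R.rep 1)).natDegree ≤ degOver k R := by
  have := Module.Finite.of_restrictScalars_finite ℚ k (fieldOfDef k R)
  let α : fieldOfDef k R := ⟨R.rep 0 / R.rep 1, IntermediateField.subset_adjoin k _ ⟨0, 1, rfl⟩⟩
  exact (IntermediateField.minpoly_eq α).symm ▸ minpoly.natDegree_le α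

theorem linearCombination_psiMap_rep {d : ℕ}
    {R : Projectivization (AlgebraicClosure k) (Fin 2 → AlgebraicClosure k)}
    (hd : (minpoly k (R.rep 0 / R.rep 1)).natDegree ≤ d) :
    Fintype.linearCombination k (fun i : Fin (d + 1) => (R.rep 0 / R.rep 1) ^ (i : ℕ))
      (psiMap k d R).rep = 0 := by
  have hne := Polynomial.finCoeff_ne_zero (minpoly.ne_zero (Algebra.IsIntegral.isIntegral _)) hd
  obtain ⟨c, hc⟩ := Projectivization.exists_smul_eq_mk_rep k _ hne
  rw [psiMap, dif_pos hne, ← hc, Units.smul_def, map_smul,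
    Polynomial.linearCombination_finCoeff hd, minpoly.aeval, smul_zero]

end Psi

theorem psi_preimage_line_general (k : Type*) [Field k] [NumberField k] (d : ℕ)
    (P Q : Projectivization k (Fin (d + 1) → k))
    (R : Projectivization (AlgebraicClosure k) (Fin 2 → AlgebraicClosure k))
    (hR : degOver k R = d)
    (hL : (psiMap k d R).rep ∈ Submodule.span k {P.rep, Q.rep}) :
    (∑ i, algebraMap k (AlgebraicClosure k) (P.rep i) * (R.rep 0 / R.rep 1) ^ (i : ℕ)) /
        (∑ i, algebraMap k (AlgebraicClosure k) (Q.rep i) * (R.rep 0 / R.rep 1) ^ (i : ℕ)) ∈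
      Set.range (algebraMap k (AlgebraicClosure k)) := by
  have hψ := linearCombination_psiMap_rep k ((natDegree_minpoly_le_degOver k R).trans_eq hR)
  simpa only [Fintype.linearCombination_apply, Algebra.smul_def] using
    div_mem_range_algebraMap_of_mem_span_pair _ hL (psiMap k d R).rep_nonzero hψ

/-- Let `P = (a_0 : ⋯ : a_d)` and `Q = (b_0 : ⋯ : b_d)` be distinct points of `ℙ^d(k)`, let `L`
be the line through `P` and `Q`, and let `φ_{PQ}(x) = (∑ a_i x^i)/(∑ b_i x^i)`.  Then
`ψ⁻¹(L(k)) ⊆ φ_{PQ}⁻¹(ℙ¹(k))`: every `R ∈ ℙ¹(k̄)` with `[k(R):k] = d` and `ψ(R) ∈ L(k)`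
satisfies `φ_{PQ}(R) ∈ ℙ¹(k)`. -/
theorem psi_preimage_line (k : Type*) [Field k] [NumberField k] (d : ℕ) (hd : 0 < d)
    (P Q : Projectivization k (Fin (d + 1) → k)) (hPQ : P ≠ Q)
    (R : Projectivization (AlgebraicClosure k) (Fin 2 → AlgebraicClosure k))
    (hR : degOver k R = d)
    (hL : (psiMap k d R).rep ∈ Submodule.span k {P.rep, Q.rep}) :
    (∑ i, algebraMap k (AlgebraicClosure k) (P.rep i) * (R.rep 0 / R.rep 1) ^ (i : ℕ)) /
        (∑ i, algebraMap k (AlgebraicClosure k) (Q.rep i) * (R.rep 0 / R.rep 1) ^ (i : ℕ)) ∈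
      Set.range (algebraMap k (AlgebraicClosure k)) :=
  psi_preimage_line_general k d P Q R hR hL
end

section
/- Let k be a number field, let P_1,…,P_q ∈ ℙ^1(k) be distinct points, D = Σ_{i=1}^q P_i, let d be a positive integer and t a positive real number. If t ≤ d + 1 and t ≤ deg D, then Z(D,d,t,k) = {P ∈ ℙ^1(k̄) : [k(P):k] ≤ d}. -/
open scoped Classical
open NumberField IsDedekindDomain Polynomial

/-!
If `φ = (F : G)` has degree `≤ d` and `φ(P) = (a : b)` is `k`-rational, then `P` is a zero of
the binary form `bF - aG` over `k`, which is nonzero because `F` and `G` have no common zero;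
hence `[k(P):k] ≤ d`.

Conversely, let `[k(P):k] ≤ d`. Choose `min(d+1, q) ≥ t` of the points `P_i` and among them a
point `P_j`, the point at infinity if it is chosen, so that the others are affine. Let `F` be
monic of degree `d` vanishing at the chosen points other than `P_j`, and `R` monic of degree `d`,
divisible by the minimal polynomial of `P` when `P ∉ ℙ¹(k)`, with no root at the chosen points or
at the roots of `F`. For a suitable `c ≠ 0` the form `F - cR` vanishes at `P_j`, and
`φ = (F : F - cR)` lies in `Φ(D,d,t,k)`. If `P` is irrational then `φ(P) = (1 : 1)`; a rational
`P` is mapped to a rational point by every `φ`.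
-/
@[simp]
theorem Polynomial.toFn_apply {R : Type*} [Semiring R] (n : ℕ) (p : R[X]) (i : Fin n) :
    toFn n p i = p.coeff i :=
  rfl

section BinaryForm

variable {R A : Type*} [CommSemiring R] [CommSemiring A] [Algebra R A]

def binaryFormEval (D : ℕ) (f : Fin (D + 1) → R) (x y : A) : A :=
  ∑ i : Fin (D + 1), algebraMap R A (f i) * x ^ (i : ℕ) * y ^ (D - (i : ℕ))

theorem binaryFormEval_mul_mul (D : ℕ) (f : Fin (D + 1) → R) (c x y : A) :
    binaryFormEval D f (c * x) (c * y) = c ^ D * binaryFormEval D f x y := by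
  rw [binaryFormEval, binaryFormEval, Finset.mul_sum]
  refine Finset.sum_congr rfl fun i _ => ?_
  have hc : c ^ D = c ^ (i : ℕ) * c ^ (D - (i : ℕ)) := by
    rw [← pow_add, Nat.add_sub_cancel' (Nat.lt_succ_iff.mp i.isLt)]
  rw [hc, mul_pow, mul_pow]
  ring

theorem algebraMap_binaryFormEval {B : Type*} [CommSemiring B] [Algebra R B] [Algebra A B]
    [IsScalarTower R A B] (D : ℕ) (f : Fin (D + 1) → R) (x y : A) :
    algebraMap A B (binaryFormEval D f x y) =
      binaryFormEval D f (algebraMap A B x) (algebraMap A B y) := by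
  simp [binaryFormEval, IsScalarTower.algebraMap_apply R A B]

theorem binaryFormEval_zero_right (D : ℕ) (f : Fin (D + 1) → R) (x : A) :
    binaryFormEval D f x 0 = algebraMap R A (f (Fin.last D)) * x ^ D := by
  rw [binaryFormEval, Fintype.sum_eq_single (Fin.last D) fun i hi => ?_]
  · simp
  · rw [zero_pow (Nat.sub_ne_zero_of_lt (Fin.val_lt_last hi)), mul_zero]

end BinaryForm

theorem binaryFormEval_smul_sub_smul {R A : Type*} [CommRing R] [CommRing A] [Algebra R A]
    (D : ℕ) (f g : Fin (D + 1) → R) (a b : R) (x y : A) :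
    binaryFormEval D (b • f - a • g) x y =
      algebraMap R A b * binaryFormEval D f x y - algebraMap R A a * binaryFormEval D g x y := by
  simp only [binaryFormEval, Pi.sub_apply, Pi.smul_apply, smul_eq_mul, map_sub, map_mul,
    Finset.mul_sum, ← Finset.sum_sub_distrib]
  exact Finset.sum_congr rfl fun i _ => by ring

section BinaryFormField

variable {K L : Type*} [Field K] [Field L] [Algebra K L]

theorem binaryFormEval_toFn {D : ℕ} {p : K[X]} (hp : p.natDegree ≤ D) (x : L) {y : L}
    (hy : y ≠ 0) :
    binaryFormEval D (toFn (D + 1) p) x y = y ^ D * aeval (x / y) p := by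
  rw [aeval_eq_sum_range' (Nat.lt_succ_of_le hp), Finset.mul_sum, binaryFormEval,
    ← Fin.sum_univ_eq_sum_range]
  refine Finset.sum_congr rfl fun i _ => ?_
  rw [div_pow, pow_sub₀ y hy (Nat.lt_succ_iff.mp i.isLt), Algebra.smul_def, toFn_apply]
  field_simp

theorem exists_binaryFormEval_eq_zero [IsAlgClosed L] {D : ℕ} (hD : 0 < D)
    (f : Fin (D + 1) → K) :
    ∃ x y : L, ¬(x = 0 ∧ y = 0) ∧ binaryFormEval D f x y = 0 := by
  by_cases hf : f (Fin.last D) = 0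
  · exact ⟨1, 0, by simp, by simp [binaryFormEval_zero_right, hf]⟩
  have hpD : (ofFn (D + 1) f).natDegree = D :=
    natDegree_eq_of_le_of_coeff_ne_zero (Nat.lt_succ_iff.mp (ofFn_natDegree_lt (by omega) f))
      (by rw [ofFn_coeff_eq_val_of_lt _ D.lt_succ_self]; exact hf)
  obtain ⟨z, hz⟩ := IsAlgClosed.exists_aeval_eq_zero L (ofFn (D + 1) f)
    (by rw [degree_eq_natDegree (ne_zero_of_natDegree_gt (hpD ▸ hD)), hpD]; exact_mod_cast hD.ne')
  refine ⟨z, 1, by simp, ?_⟩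
  rw [← toFn_comp_ofFn_eq_id (D + 1) f, binaryFormEval_toFn hpD.le z one_ne_zero, div_one, hz,
    mul_zero]

end BinaryFormField

theorem ne_zero_iff_fin_two {M : Type*} [Zero M] (v : Fin 2 → M) :
    v ≠ 0 ↔ ¬(v 0 = 0 ∧ v 1 = 0) := by
  simp [funext_iff, Fin.forall_fin_two]

open scoped LinearAlgebra.Projectivization

namespace Projectivization

variable {F : Type*} [Field F]

theorem mk_eq_mk_iff_fin_two (v w : Fin 2 → F) (hv : v ≠ 0) (hw : w ≠ 0) :
    mk F v hv = mk F w hw ↔ v 0 * w 1 = v 1 * w 0 := by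
  rw [mk_eq_mk_iff']
  constructor
  · rintro ⟨a, rfl⟩
    simp only [Pi.smul_apply, smul_eq_mul]
    ring
  · intro h
    rcases (ne_zero_iff_fin_two w).1 hw |> not_and_or.1 with h0 | h1
    · refine ⟨v 0 / w 0, funext (Fin.forall_fin_two.2 ⟨?_, ?_⟩)⟩
      · simp [h0]
      · simp only [Pi.smul_apply, smul_eq_mul]
        field_simp
        linear_combination h
    · refine ⟨v 1 / w 1, funext (Fin.forall_fin_two.2 ⟨?_, ?_⟩)⟩
      · simp only [Pi.smul_apply, smul_eq_mul]
        field_simp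
        linear_combination -h
      · simp [h1]

theorem eq_iff_fin_two (P Q : ℙ F (Fin 2 → F)) :
    P = Q ↔ P.rep 0 * Q.rep 1 = P.rep 1 * Q.rep 0 := by
  conv_lhs => rw [← P.mk_rep, ← Q.mk_rep]
  exact mk_eq_mk_iff_fin_two _ _ _ _

end Projectivization

section Embedding

open Projectivization

variable {k : Type*} [Field k]

theorem mk_mem_range_embed_iff (v : Fin 2 → AlgebraicClosure k) (hv : v ≠ 0) :
    mk _ v hv ∈ Set.range (embed k) ↔ isKRationalPair k (v 0) (v 1) := by
  constructor
  · rintro ⟨Q, hQ⟩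
    rw [embed, mk_eq_mk_iff_fin_two] at hQ
    refine ⟨Q.rep 0, Q.rep 1, (ne_zero_iff_fin_two _).1 Q.rep_nonzero, ?_⟩
    linear_combination -hQ
  · rintro ⟨a, b, hab, h⟩
    have hab' : ![a, b] ≠ 0 := (ne_zero_iff_fin_two _).2 (by simpa using hab)
    obtain ⟨u, hu⟩ := exists_smul_eq_mk_rep k ![a, b] hab'
    refine ⟨mk k ![a, b] hab', ?_⟩
    rw [embed, mk_eq_mk_iff_fin_two, ← hu]
    simp only [Pi.smul_apply, Units.smul_def, smul_eq_mul, map_mul, Matrix.cons_val_zero,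
      Matrix.cons_val_one, Matrix.cons_val_fin_one]
    linear_combination (-algebraMap k (AlgebraicClosure k) u) * h

theorem mem_range_embed_iff (P : ℙ (AlgebraicClosure k) (Fin 2 → AlgebraicClosure k)) :
    P ∈ Set.range (embed k) ↔ isKRationalPair k (P.rep 0) (P.rep 1) := by
  conv_lhs => rw [← P.mk_rep]
  exact mk_mem_range_embed_iff _ _

theorem embed_injective : Function.Injective (embed k) := by
  intro Q Q' h
  rw [embed, embed, mk_eq_mk_iff_fin_two] at h
  rw [eq_iff_fin_two]
  exact (algebraMap k (AlgebraicClosure k)).injective (by simpa only [map_mul] using h)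

theorem binaryFormEval_embed_rep (Q : ℙ k (Fin 2 → k)) :
    ∃ u : (AlgebraicClosure k)ˣ, ∀ (D : ℕ) (f : Fin (D + 1) → k),
      binaryFormEval D f ((embed k Q).rep 0) ((embed k Q).rep 1) =
        (u : AlgebraicClosure k) ^ D * algebraMap k _ (binaryFormEval D f (Q.rep 0) (Q.rep 1)) := by
  obtain ⟨u, hu⟩ := exists_smul_eq_mk_rep (AlgebraicClosure k)
    (fun i => algebraMap k (AlgebraicClosure k) (Q.rep i)) _
  refine ⟨u, fun D f => ?_⟩
  rw [embed, ← hu, algebraMap_binaryFormEval, ← binaryFormEval_mul_mul]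
  rfl

end Embedding

namespace P1Mor

open Projectivization

variable {k : Type*} [Field k]

theorem evalF_eq_binaryFormEval (φ : P1Mor k) (x y : AlgebraicClosure k) :
    φ.evalF x y = binaryFormEval φ.deg φ.f x y := rfl

theorem evalG_eq_binaryFormEval (φ : P1Mor k) (x y : AlgebraicClosure k) :
    φ.evalG x y = binaryFormEval φ.deg φ.g x y := rfl

theorem smul_f_sub_smul_g_ne_zero (φ : P1Mor k) {a b : k} (hab : ¬(a = 0 ∧ b = 0)) :
    b • φ.f - a • φ.g ≠ 0 := by
  -- If `b F = a G` identically, a zero of `G` (of `F` when `b = 0`) is a common zero.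
  intro h
  have hFG : ∀ x y : AlgebraicClosure k,
      algebraMap k _ b * φ.evalF x y = algebraMap k _ a * φ.evalG x y := fun x y => by
    rw [← sub_eq_zero, evalF_eq_binaryFormEval, evalG_eq_binaryFormEval,
      ← binaryFormEval_smul_sub_smul, h]
    simp [binaryFormEval]
  by_cases hb : b = 0
  · have ha : a ≠ 0 := fun ha => hab ⟨ha, hb⟩
    obtain ⟨x, y, hxy, hF⟩ :=
      exists_binaryFormEval_eq_zero (L := AlgebraicClosure k) φ.degPos φ.f
    exact φ.noCommonRoot x y hxy
      ⟨hF, show φ.evalG x y = 0 by simpa [hb, ha] using (hFG x y).symm⟩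
  · obtain ⟨x, y, hxy, hG⟩ :=
      exists_binaryFormEval_eq_zero (L := AlgebraicClosure k) φ.degPos φ.g
    exact φ.noCommonRoot x y hxy
      ⟨show φ.evalF x y = 0 by simpa [hb, hG, evalG_eq_binaryFormEval] using hFG x y, hG⟩

theorem apply_mem_range_embed_iff (φ : P1Mor k)
    (P : ℙ (AlgebraicClosure k) (Fin 2 → AlgebraicClosure k)) :
    φ.apply P ∈ Set.range (embed k) ↔
      isKRationalPair k (φ.evalF (P.rep 0) (P.rep 1)) (φ.evalG (P.rep 0) (P.rep 1)) :=
  mk_mem_range_embed_iff _ _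

theorem apply_embed_mem_range (φ : P1Mor k) (Q : ℙ k (Fin 2 → k)) :
    φ.apply (embed k Q) ∈ Set.range (embed k) := by
  obtain ⟨u, hu⟩ := binaryFormEval_embed_rep Q
  rw [apply_mem_range_embed_iff, evalF_eq_binaryFormEval, evalG_eq_binaryFormEval, hu, hu]
  refine ⟨binaryFormEval φ.deg φ.f (Q.rep 0) (Q.rep 1),
    binaryFormEval φ.deg φ.g (Q.rep 0) (Q.rep 1), fun h => ?_, by ring⟩
  exact φ.noCommonRoot _ _ ((ne_zero_iff_fin_two _).1 (embed k Q).rep_nonzero)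
    ⟨show binaryFormEval _ _ _ _ = 0 by rw [hu, h.1, map_zero, mul_zero],
      show binaryFormEval _ _ _ _ = 0 by rw [hu, h.2, map_zero, mul_zero]⟩

theorem apply_embed_eq_zeroPt [NumberField k] (φ : P1Mor k) {Q : ℙ k (Fin 2 → k)}
    (h : binaryFormEval φ.deg φ.f (Q.rep 0) (Q.rep 1) = 0) : φ.apply (embed k Q) = zeroPt k := by
  obtain ⟨u, hu⟩ := binaryFormEval_embed_rep Q
  rw [apply, zeroPt, mk_eq_mk_iff_fin_two]
  simp [evalF_eq_binaryFormEval, hu, h]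

theorem apply_embed_eq_infPt [NumberField k] (φ : P1Mor k) {Q : ℙ k (Fin 2 → k)}
    (h : binaryFormEval φ.deg φ.g (Q.rep 0) (Q.rep 1) = 0) : φ.apply (embed k Q) = infPt k := by
  obtain ⟨u, hu⟩ := binaryFormEval_embed_rep Q
  rw [apply, infPt, mk_eq_mk_iff_fin_two]
  simp [evalG_eq_binaryFormEval, hu, h]

/-- The morphism `(x : y) ↦ (y ^ d p(x / y) : y ^ d q(x / y))`. -/
noncomputable def ofCoprime (p q : k[X]) (d : ℕ) (hd : 0 < d) (hp : p.natDegree = d)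
    (hq : q.natDegree ≤ d) (hpq : IsCoprime p q) : P1Mor k where
  deg := d
  degPos := hd
  f := toFn (d + 1) p
  g := toFn (d + 1) q
  noCommonRoot x y hxy := by
    rintro ⟨hF, hG⟩
    change binaryFormEval d (toFn (d + 1) p) x y = 0 at hF
    change binaryFormEval d (toFn (d + 1) q) x y = 0 at hG
    by_cases hy : y = 0
    · have hx : x ≠ 0 := fun hx => hxy ⟨hx, hy⟩
      rw [hy, binaryFormEval_zero_right, toFn_apply, ← hp] at hF
      simp [hx, ne_zero_of_natDegree_gt (hp ▸ hd)] at hF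
    · rw [binaryFormEval_toFn hp.le x hy] at hF
      rw [binaryFormEval_toFn hq x hy] at hG
      rcases aeval_ne_zero_of_isCoprime hpq (x / y) with h | h
      · exact h ((mul_eq_zero.1 hF).resolve_left (pow_ne_zero _ hy))
      · exact h ((mul_eq_zero.1 hG).resolve_left (pow_ne_zero _ hy))

theorem ofCoprime_apply_mem_range {p q : k[X]} {d : ℕ} (hd : 0 < d) (hp : p.natDegree = d)
    (hq : q.natDegree ≤ d) (hpq : IsCoprime p q)
    {P : ℙ (AlgebraicClosure k) (Fin 2 → AlgebraicClosure k)} (hy : P.rep 1 ≠ 0)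
    (h : aeval (P.rep 0 / P.rep 1) (p - q) = 0) :
    (ofCoprime p q d hd hp hq hpq).apply P ∈ Set.range (embed k) := by
  rw [apply_mem_range_embed_iff]
  refine ⟨1, 1, by simp, ?_⟩
  change _ * binaryFormEval d (toFn (d + 1) p) _ _ = _ * binaryFormEval d (toFn (d + 1) q) _ _
  rw [binaryFormEval_toFn hp.le _ hy, binaryFormEval_toFn hq _ hy]
  rw [map_sub, sub_eq_zero] at h
  rw [h]

end P1Mor

section PhiSet

open Projectivization

variable {k : Type*} [Field k] [NumberField k]

theorem mem_PhiSet_of_le_card {q : ℕ} {Pts : Fin q → ℙ k (Fin 2 → k)}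
    (hPts : Function.Injective Pts) {d : ℕ} {t : ℝ} (φ : P1Mor k) (hφ : φ.deg ≤ d)
    (S : Finset (Fin q))
    (hS : ∀ i ∈ S, φ.apply (embed k (Pts i)) = zeroPt k ∨ φ.apply (embed k (Pts i)) = infPt k)
    (htS : t ≤ S.card) : φ ∈ PhiSet k Pts d t := by
  refine ⟨hφ, htS.trans ?_⟩
  have hcard : ((fun i => embed k (Pts i)) '' S).ncard = S.card := by
    rw [Set.ncard_image_of_injective _ fun i j h => hPts (embed_injective h),
      Set.ncard_coe_finset]
  rw [← hcard]
  exact Nat.cast_le.2 <| Set.ncard_le_ncard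
    (by rintro _ ⟨i, hi, rfl⟩; exact ⟨hS i hi, i, rfl⟩)
    ((Set.finite_range _).subset Set.inter_subset_right)

end PhiSet

section FieldOfDefinition

open Projectivization IntermediateField

variable {k : Type*} [Field k] {P : ℙ (AlgebraicClosure k) (Fin 2 → AlgebraicClosure k)}

theorem fieldOfDef_le {L : IntermediateField k (AlgebraicClosure k)} {j : Fin 2}
    (hj : P.rep j ≠ 0) (h : ∀ i, P.rep i / P.rep j ∈ L) : fieldOfDef k P ≤ L := by
  rw [fieldOfDef, adjoin_le_iff]
  rintro _ ⟨i, i', rfl⟩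
  rw [← div_div_div_cancel_right₀ hj]
  exact div_mem (h i) (h i')

theorem fieldOfDef_eq_adjoin (hy : P.rep 1 ≠ 0) : fieldOfDef k P = k⟮P.rep 0 / P.rep 1⟯ := by
  refine le_antisymm (fieldOfDef_le hy (Fin.forall_fin_two.2 ⟨mem_adjoin_simple_self k _, ?_⟩))
    (adjoin_simple_le_iff.2 (subset_adjoin k _ ⟨0, 1, rfl⟩))
  rw [div_self hy]
  exact one_mem _

theorem fieldOfDef_eq_bot (hy : P.rep 1 = 0) : fieldOfDef k P = ⊥ := by
  have hx : P.rep 0 ≠ 0 := fun hx => (ne_zero_iff_fin_two _).1 P.rep_nonzero ⟨hx, hy⟩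
  refine le_bot_iff.1 (fieldOfDef_le hx (Fin.forall_fin_two.2 ⟨?_, ?_⟩))
  · rw [div_self hx]; exact one_mem _
  · rw [hy, zero_div]; exact zero_mem _

theorem degOver_eq_one (hy : P.rep 1 = 0) : degOver k P = 1 := by
  rw [degOver, fieldOfDef_eq_bot hy, IntermediateField.finrank_bot]

theorem degOver_eq_natDegree_minpoly (hy : P.rep 1 ≠ 0) :
    degOver k P = (minpoly k (P.rep 0 / P.rep 1)).natDegree := by
  rw [degOver, fieldOfDef_eq_adjoin hy, adjoin.finrank (Algebra.IsIntegral.isIntegral _)]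

theorem degOver_pos : 0 < degOver k P := by
  by_cases hy : P.rep 1 = 0
  · rw [degOver_eq_one hy]; exact one_pos
  · rw [degOver_eq_natDegree_minpoly hy]
    exact minpoly.natDegree_pos (Algebra.IsIntegral.isIntegral _)

theorem degOver_le_natDegree (hy : P.rep 1 ≠ 0) {p : k[X]} (hp : p ≠ 0)
    (h : aeval (P.rep 0 / P.rep 1) p = 0) : degOver k P ≤ p.natDegree := by
  rw [degOver_eq_natDegree_minpoly hy]
  exact natDegree_le_natDegree (minpoly.degree_le_of_ne_zero k _ hp h)

theorem rep_one_ne_zero_of_notMem_range (hP : P ∉ Set.range (embed k)) : P.rep 1 ≠ 0 :=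
  fun hy => hP ((mem_range_embed_iff P).2 ⟨1, 0, by simp, by simp [hy]⟩)

theorem not_isRoot_minpoly_of_notMem_range (hP : P ∉ Set.range (embed k)) (w : k) :
    ¬(minpoly k (P.rep 0 / P.rep 1)).IsRoot w := by
  intro hw
  have hint := Algebra.IsIntegral.isIntegral (R := k) (P.rep 0 / P.rep 1)
  have hdeg := degree_eq_one_of_irreducible_of_root (minpoly.irreducible hint) hw
  obtain ⟨a, ha⟩ := minpoly.natDegree_eq_one_iff.1 (natDegree_eq_of_degree_eq_some hdeg)
  refine hP ((mem_range_embed_iff P).2 ⟨a, 1, by simp, ?_⟩)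
  rw [ha, map_one, one_mul, div_mul_cancel₀ _ (rep_one_ne_zero_of_notMem_range hP)]

theorem P1Mor.degOver_le_deg_of_apply_mem_range (φ : P1Mor k)
    (h : φ.apply P ∈ Set.range (embed k)) : degOver k P ≤ φ.deg := by
  by_cases hy : P.rep 1 = 0
  · rw [degOver_eq_one hy]; exact φ.degPos
  obtain ⟨a, b, hab, hba⟩ := (φ.apply_mem_range_embed_iff P).1 h
  set w := b • φ.f - a • φ.g
  have hw0 : ofFn (φ.deg + 1) w ≠ 0 := fun h0 =>
    φ.smul_f_sub_smul_g_ne_zero hab (injective_ofFn _ (h0.trans (map_zero _).symm))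
  have hwdeg : (ofFn (φ.deg + 1) w).natDegree ≤ φ.deg :=
    Nat.lt_succ_iff.1 (ofFn_natDegree_lt (Nat.succ_pos _) w)
  have hroot : aeval (P.rep 0 / P.rep 1) (ofFn (φ.deg + 1) w) = 0 := by
    have hform : binaryFormEval φ.deg w (P.rep 0) (P.rep 1) = 0 := by
      rw [binaryFormEval_smul_sub_smul, ← evalF_eq_binaryFormEval, ← evalG_eq_binaryFormEval,
        hba, sub_self]
    rw [← toFn_comp_ofFn_eq_id _ w, binaryFormEval_toFn hwdeg _ hy] at hform
    exact (mul_eq_zero.1 hform).resolve_left (pow_ne_zero _ hy)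
  exact (degOver_le_natDegree hy hw0 hroot).trans hwdeg

end FieldOfDefinition

section Interpolation

variable {K : Type*} [Field K]

theorem isCoprime_X_sub_C_of_not_isRoot {p : K[X]} {a : K} (h : ¬p.IsRoot a) :
    IsCoprime (X - C a) p :=
  (irreducible_X_sub_C a).coprime_iff_not_dvd.2 (mt dvd_iff_isRoot.1 h)

theorem IsCoprime.sub_C_mul_right {F R : K[X]} (h : IsCoprime F R) {c : K} (hc : c ≠ 0) :
    IsCoprime F (F - C c * R) := by
  simpa using IsCoprime.mul_sub_left_right_iff (z := 1) |>.2
    ((isCoprime_mul_unit_left_right (isUnit_C.2 hc.isUnit) F R).2 h)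

theorem natDegree_sub_C_mul_le {F R : K[X]} {d : ℕ} (hF : F.natDegree ≤ d) (hR : R.natDegree ≤ d)
    (c : K) : (F - C c * R).natDegree ≤ d :=
  (natDegree_sub_le_of_le hF ((natDegree_C_mul_le _ _).trans hR)).trans (max_self d).le

theorem exists_monic_dvd_forall_not_isRoot [Infinite K] {m : K[X]} (hm : m.Monic) {d : ℕ}
    (hmd : m.natDegree ≤ d) {B : Finset K} (hB : ∀ w ∈ B, ¬m.IsRoot w) :
    ∃ R : K[X], R.Monic ∧ R.natDegree = d ∧ m ∣ R ∧ ∀ w ∈ B, ¬R.IsRoot w := by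
  obtain ⟨c, hc⟩ := Infinite.exists_notMem_finset B
  refine ⟨m * (X - C c) ^ (d - m.natDegree), hm.mul ((monic_X_sub_C c).pow _), ?_,
    dvd_mul_right _ _, fun w hw => ?_⟩
  · rw [hm.natDegree_mul ((monic_X_sub_C c).pow _), natDegree_pow, natDegree_X_sub_C]
    omega
  · have hwc : w ≠ c := by rintro rfl; exact hc hw
    simpa [IsRoot, sub_eq_zero, hwc] using hB w hw

theorem exists_monic_isCoprime_isRoot_iff [Infinite K] {R : K[X]} (hR : R ≠ 0) {s : Finset K}
    {d : ℕ} (hs : s.card ≤ d) (hRs : ∀ w ∈ s, ¬R.IsRoot w) (B : Finset K) :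
    ∃ F : K[X], F.Monic ∧ F.natDegree = d ∧ IsCoprime F R ∧ ∀ w ∈ B, (F.IsRoot w ↔ w ∈ s) := by
  obtain ⟨c, hc⟩ := Infinite.exists_notMem_finset (B ∪ R.roots.toFinset)
  have hcR : ¬R.IsRoot c := fun h =>
    hc (Finset.mem_union_right _ (Multiset.mem_toFinset.2 ((mem_roots hR).2 h)))
  have hprod : (∏ w ∈ s, (X - C w)).Monic := monic_prod_of_monic _ _ fun w _ => monic_X_sub_C w
  refine ⟨(∏ w ∈ s, (X - C w)) * (X - C c) ^ (d - s.card), hprod.mul ((monic_X_sub_C c).pow _),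
    ?_, (IsCoprime.prod_left fun w hw => isCoprime_X_sub_C_of_not_isRoot (hRs w hw)).mul_left
      (isCoprime_X_sub_C_of_not_isRoot hcR).pow_left, fun w hw => ?_⟩
  · rw [hprod.natDegree_mul ((monic_X_sub_C c).pow _), natDegree_finsetProd_X_sub_C_eq_card,
      natDegree_pow, natDegree_X_sub_C]
    omega
  · have hwc : w ≠ c := by rintro rfl; exact hc (Finset.mem_union_left _ hw)
    simp [IsRoot, eval_prod, Finset.prod_eq_zero_iff, sub_eq_zero, hwc]

theorem exists_ne_zero_binaryFormEval_sub_C_mul_eq_zero {F R : K[X]} {d : ℕ} (hF : F.Monic)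
    (hFd : F.natDegree = d) (hR : R.Monic) (hRd : R.natDegree = d) {a b : K}
    (hab : b ≠ 0 → F.eval (a / b) ≠ 0 ∧ R.eval (a / b) ≠ 0) :
    ∃ c ≠ 0, binaryFormEval d (toFn (d + 1) (F - C c * R)) a b = 0 := by
  by_cases hb : b = 0
  · refine ⟨1, one_ne_zero, ?_⟩
    rw [hb, binaryFormEval_zero_right]
    simp [← hFd, hF.coeff_natDegree, hFd ▸ hRd ▸ hR.coeff_natDegree]
  · obtain ⟨hFa, hRa⟩ := hab hb
    refine ⟨F.eval (a / b) / R.eval (a / b), div_ne_zero hFa hRa, ?_⟩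
    rw [binaryFormEval_toFn (natDegree_sub_C_mul_le hFd.le hRd.le _) a hb]
    simp [coe_aeval_eq_eval, div_mul_cancel₀ _ hRa]

end Interpolation

section Construction

open Projectivization

variable {k : Type*} [Field k]

theorem exists_finset_card_eq_forall_ne_rep_one_ne_zero {q : ℕ}
    {Pts : Fin q → ℙ k (Fin 2 → k)} (hPts : Function.Injective Pts) {n : ℕ} (hn : 0 < n)
    (hnq : n ≤ q) :
    ∃ S : Finset (Fin q), S.card = n ∧ ∃ j ∈ S, ∀ i ∈ S, i ≠ j → (Pts i).rep 1 ≠ 0 := by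
  obtain ⟨S, -, hS⟩ := Finset.exists_subset_card_eq (s := (Finset.univ : Finset (Fin q)))
    (n := n) (by rwa [Finset.card_univ, Fintype.card_fin])
  refine ⟨S, hS, ?_⟩
  by_cases h : ∃ j ∈ S, (Pts j).rep 1 = 0
  · obtain ⟨j, hj, hj0⟩ := h
    exact ⟨j, hj, fun i _ hij hi0 => hij (hPts ((eq_iff_fin_two _ _).2 (by simp [hi0, hj0])))⟩
  · obtain ⟨j, hj⟩ := Finset.card_pos.1 (hS ▸ hn)
    exact ⟨j, hj, fun i hi _ hi0 => h ⟨i, hi, hi0⟩⟩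

variable [NumberField k]

theorem exists_mem_PhiSet_forall_apply_mem_range {q : ℕ} {Pts : Fin q → ℙ k (Fin 2 → k)}
    (hPts : Function.Injective Pts) {d : ℕ} (hd : 0 < d) {t : ℝ} (ht : 0 < t)
    (htd : t ≤ d + 1) (htq : t ≤ q) {m : k[X]} (hm : m.Monic) (hmd : m.natDegree ≤ d)
    (hroot : ∀ w : k, ¬m.IsRoot w) :
    ∃ φ ∈ PhiSet k Pts d t, ∀ P : ℙ (AlgebraicClosure k) (Fin 2 → AlgebraicClosure k),
      P.rep 1 ≠ 0 → aeval (P.rep 0 / P.rep 1) m = 0 → φ.apply P ∈ Set.range (embed k) := by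
  have hq : 0 < q := by exact_mod_cast ht.trans_le htq
  obtain ⟨S, hS, j, hj, hSj⟩ := exists_finset_card_eq_forall_ne_rep_one_ne_zero hPts
    (n := min (d + 1) q) (by omega) (min_le_right _ _)
  set slope : Fin q → k := fun i => (Pts i).rep 0 / (Pts i).rep 1
  obtain ⟨R, hR, hRd, hmR, hRS⟩ :=
    exists_monic_dvd_forall_not_isRoot hm hmd (B := S.image slope) fun w _ => hroot w
  obtain ⟨F, hF, hFd, hFR, hFS⟩ := exists_monic_isCoprime_isRoot_iff hR.ne_zero
    (s := (S.erase j).image slope) (d := d)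
    (Finset.card_image_le.trans (by rw [Finset.card_erase_of_mem hj, hS]; omega))
    (fun w hw => hRS w (Finset.image_subset_image (Finset.erase_subset _ _) hw)) (S.image slope)
  have hFj : (Pts j).rep 1 ≠ 0 → ¬F.IsRoot (slope j) := by
    intro hb hFj
    obtain ⟨i, hi, hij⟩ := Finset.mem_image.1 ((hFS _ (Finset.mem_image_of_mem _ hj)).1 hFj)
    have hi1 := hSj i (Finset.mem_of_mem_erase hi) (Finset.ne_of_mem_erase hi)
    exact Finset.ne_of_mem_erase hi
      (hPts ((eq_iff_fin_two _ _).2 (by linear_combination (div_eq_div_iff hi1 hb).1 hij)))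
  obtain ⟨c, hc, hcj⟩ := exists_ne_zero_binaryFormEval_sub_C_mul_eq_zero hF hFd hR hRd
    fun hb => ⟨hFj hb, hRS _ (Finset.mem_image_of_mem _ hj)⟩
  have hGd := natDegree_sub_C_mul_le hFd.le hRd.le c
  have hFG := hFR.sub_C_mul_right hc
  refine ⟨P1Mor.ofCoprime F (F - C c * R) d hd hFd hGd hFG,
    mem_PhiSet_of_le_card hPts _ le_rfl S (fun i hi => ?_) (hS ▸ ?_),
    fun P hy hP => P1Mor.ofCoprime_apply_mem_range hd hFd hGd hFG hy ?_⟩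
  · by_cases hij : i = j
    · exact Or.inr (P1Mor.apply_embed_eq_infPt _ (hij ▸ hcj))
    · refine Or.inl (P1Mor.apply_embed_eq_zeroPt _ ?_)
      have hroot : F.IsRoot (slope i) := (hFS _ (Finset.mem_image_of_mem _ hi)).2
        (Finset.mem_image_of_mem _ (Finset.mem_erase.2 ⟨hij, hi⟩))
      change binaryFormEval d (toFn (d + 1) F) _ _ = 0
      rw [binaryFormEval_toFn hFd.le _ (hSj i hi hij), coe_aeval_eq_eval, hroot.eq_zero, mul_zero]
  · push_cast
    exact le_min htd htq
  · obtain ⟨r, rfl⟩ := hmR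
    simp [hP]

end Construction

theorem Z_eq_bounded_degree_general (k : Type*) [Field k] [NumberField k]
    {q : ℕ} (Pts : Fin q → Projectivization k (Fin 2 → k)) (hPts : Function.Injective Pts)
    (d : ℕ) (t : ℝ) (ht : 0 < t) (htd : t ≤ (d : ℝ) + 1) (htq : t ≤ (q : ℝ)) :
    ZSet k Pts d t =
      {P : Projectivization (AlgebraicClosure k) (Fin 2 → AlgebraicClosure k) |
        degOver k P ≤ d} := by
  ext P
  simp only [ZSet, Set.mem_iUnion, Set.mem_ofPred_eq, exists_prop]
  constructor
  · rintro ⟨φ, hφ, hP⟩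
    exact (φ.degOver_le_deg_of_apply_mem_range hP).trans hφ.1
  · intro hP
    have hd : 0 < d := degOver_pos.trans_le hP
    by_cases hrat : P ∈ Set.range (embed k)
    · obtain ⟨Q, rfl⟩ := hrat
      obtain ⟨φ, hφ, -⟩ := exists_mem_PhiSet_forall_apply_mem_range hPts hd ht htd htq
        monic_one (by simp) (by simp)
      exact ⟨φ, hφ, φ.apply_embed_mem_range Q⟩
    · have hy := rep_one_ne_zero_of_notMem_range hrat
      have hint := Algebra.IsIntegral.isIntegral (R := k) (P.rep 0 / P.rep 1)
      obtain ⟨φ, hφ, hφP⟩ := exists_mem_PhiSet_forall_apply_mem_range hPts hd ht htd htq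
        (minpoly.monic hint) (degOver_eq_natDegree_minpoly hy ▸ hP)
        (not_isRoot_minpoly_of_notMem_range hrat)
      exact ⟨φ, hφ, hφP P hy (minpoly.aeval k _)⟩

/-- If `t ≤ d + 1` and `t ≤ deg D`, then `Z(D,d,t,k) = {P ∈ ℙ¹(k̄) : [k(P):k] ≤ d}`. -/
theorem Z_eq_bounded_degree (k : Type*) [Field k] [NumberField k]
    {q : ℕ} (Pts : Fin q → Projectivization k (Fin 2 → k)) (hPts : Function.Injective Pts)
    (d : ℕ) (hd : 0 < d) (t : ℝ) (ht : 0 < t) (htd : t ≤ (d : ℝ) + 1) (htq : t ≤ (q : ℝ)) :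
    ZSet k Pts d t =
      {P : Projectivization (AlgebraicClosure k) (Fin 2 → AlgebraicClosure k) |
        degOver k P ≤ d} :=
  Z_eq_bounded_degree_general k Pts hPts d t ht htd htq
end
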